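/- For every ω ∈ (-1,1) and every x ∈ ℝ, U_ω(x)² · exp( 6i ∫₀ˣ |U_ω(x')|² dx' ) = (1−ω²) · ( 1 + ω cosh(2√(1−ω²) x) + i √(1−ω²) sinh(2√(1−ω²) x) )² / ( ω + cosh(2√(1−ω²) x) )³. -/

import Mathlib

/-!
Write `U_ω = k / z` with `k = √(1-ω²)` and `z = √(1+ω) cosh(kx) + i √(1-ω) sinh(kx)`, which lies
in the right half-plane. Since `k = √(1+ω) √(1-ω)` and `cosh² - sinh² = 1`, one finds
`Im (z' / z) = k² / |z|² = |U_ω|²`, so the phase `∫₀ˣ |U_ω|²` is `arg z`. Hence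
`U_ω² exp(6i ∫₀ˣ |U_ω|²) = k² z⁴ / |z|⁶`, and the double-angle formulas give
`z² = 1 + ω cosh(2kx) + i k sinh(2kx)` and `|z|² = ω + cosh(2kx)`.
-/

open Complex

/-- The MTM soliton profile `U_ω`. -/
noncomputable def solitonU (ω : ℝ) (x : ℝ) : ℂ :=
  (Real.sqrt (1 - ω ^ 2) : ℂ) /
    ((Real.sqrt (1 + ω) * Real.cosh (Real.sqrt (1 - ω ^ 2) * x) : ℝ) +
      Complex.I * (Real.sqrt (1 - ω) * Real.sinh (Real.sqrt (1 - ω ^ 2) * x) : ℝ))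

theorem HasDerivAt.arg_real {z : ℝ → ℂ} {z' : ℂ} {x : ℝ} (hz : HasDerivAt z z' x)
    (hx : z x ∈ slitPlane) : HasDerivAt (fun t => arg (z t)) (z' / z x).im x := by
  simpa only [Function.comp_def, imCLM_apply, log_im] using
    imCLM.hasFDerivAt.comp_hasDerivAt x (hz.clog_real hx)

theorem exp_nat_mul_I_mul_arg_mul_norm_pow (n : ℕ) (z : ℂ) :
    exp (n * I * arg z) * (‖z‖ : ℂ) ^ n = z ^ n := by
  conv_rhs => rw [← norm_mul_exp_arg_mul_I z]
  rw [mul_pow, ← exp_nat_mul]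
  ring_nf

noncomputable def solitonDenom (ω x : ℝ) : ℂ :=
  (Real.sqrt (1 + ω) * Real.cosh (Real.sqrt (1 - ω ^ 2) * x) : ℝ) +
    I * (Real.sqrt (1 - ω) * Real.sinh (Real.sqrt (1 - ω ^ 2) * x) : ℝ)

theorem solitonU_eq_div (ω x : ℝ) :
    solitonU ω x = (Real.sqrt (1 - ω ^ 2) : ℂ) / solitonDenom ω x := rfl

section
variable {ω : ℝ}

theorem sqrt_one_sub_sq_eq_mul (hω : -1 ≤ ω) :
    Real.sqrt (1 - ω ^ 2) = Real.sqrt (1 + ω) * Real.sqrt (1 - ω) := by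
  rw [← Real.sqrt_mul (by linarith)]
  congr 1
  ring

@[simp] theorem solitonDenom_re (ω x : ℝ) :
    (solitonDenom ω x).re = Real.sqrt (1 + ω) * Real.cosh (Real.sqrt (1 - ω ^ 2) * x) := by
  simp only [solitonDenom, add_re, ofReal_re, I_mul_re, ofReal_im, neg_zero, add_zero]

@[simp] theorem solitonDenom_im (ω x : ℝ) :
    (solitonDenom ω x).im = Real.sqrt (1 - ω) * Real.sinh (Real.sqrt (1 - ω ^ 2) * x) := by
  simp only [solitonDenom, add_im, ofReal_im, I_mul_im, ofReal_re, zero_add]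

theorem hasDerivAt_solitonDenom (ω x : ℝ) :
    HasDerivAt (solitonDenom ω)
      (Real.sqrt (1 - ω ^ 2) * ((Real.sqrt (1 + ω) * Real.sinh (Real.sqrt (1 - ω ^ 2) * x) : ℝ) +
        I * (Real.sqrt (1 - ω) * Real.cosh (Real.sqrt (1 - ω ^ 2) * x) : ℝ))) x := by
  set k := Real.sqrt (1 - ω ^ 2)
  have hlin : HasDerivAt (fun y : ℝ => k * y) k x := by
    simpa using (hasDerivAt_id x).const_mul k
  have hre := ((Real.hasDerivAt_cosh _).comp x hlin).const_mul (Real.sqrt (1 + ω))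
  have him := ((Real.hasDerivAt_sinh _).comp x hlin).const_mul (Real.sqrt (1 - ω))
  refine (hre.ofReal_comp.add (him.ofReal_comp.const_mul I)).congr_deriv ?_
  push_cast
  ring

theorem solitonDenom_mem_slitPlane (hω : -1 < ω) (x : ℝ) : solitonDenom ω x ∈ slitPlane := by
  refine mem_slitPlane_iff.2 (Or.inl ?_)
  rw [solitonDenom_re]
  exact mul_pos (Real.sqrt_pos.2 (by linarith)) (Real.cosh_pos _)

theorem arg_solitonDenom_zero (ω : ℝ) : arg (solitonDenom ω 0) = 0 := by
  simp [solitonDenom, arg_ofReal_of_nonneg, Real.sqrt_nonneg]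

theorem normSq_solitonDenom (hω₁ : -1 < ω) (hω₂ : ω < 1) (x : ℝ) :
    normSq (solitonDenom ω x) = ω + Real.cosh (2 * Real.sqrt (1 - ω ^ 2) * x) := by
  rw [normSq_apply, solitonDenom_re, solitonDenom_im, mul_assoc 2, Real.cosh_two_mul]
  have hs := Real.sq_sqrt (show 0 ≤ 1 + ω by linarith)
  have ht := Real.sq_sqrt (show 0 ≤ 1 - ω by linarith)
  set y := Real.sqrt (1 - ω ^ 2) * x
  linear_combination Real.cosh y ^ 2 * hs + Real.sinh y ^ 2 * ht + ω * Real.cosh_sq_sub_sinh_sq y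

theorem ofReal_add_I_mul_ofReal_sq (a b : ℝ) :
    ((a : ℂ) + I * b) ^ 2 = ((a ^ 2 - b ^ 2 : ℝ) : ℂ) + I * ((2 * a * b : ℝ) : ℂ) := by
  push_cast
  linear_combination (b : ℂ) ^ 2 * I_sq

theorem solitonDenom_sq (hω₁ : -1 < ω) (hω₂ : ω < 1) (x : ℝ) :
    solitonDenom ω x ^ 2 = ((1 + ω * Real.cosh (2 * Real.sqrt (1 - ω ^ 2) * x) : ℝ) : ℂ) +
      I * ((Real.sqrt (1 - ω ^ 2) * Real.sinh (2 * Real.sqrt (1 - ω ^ 2) * x) : ℝ) : ℂ) := by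
  rw [solitonDenom, ofReal_add_I_mul_ofReal_sq, mul_assoc 2 (Real.sqrt _), Real.cosh_two_mul,
    Real.sinh_two_mul]
  have hs := Real.sq_sqrt (show 0 ≤ 1 + ω by linarith)
  have ht := Real.sq_sqrt (show 0 ≤ 1 - ω by linarith)
  have hst := sqrt_one_sub_sq_eq_mul hω₁.le
  set y := Real.sqrt (1 - ω ^ 2) * x
  congr 3
  · linear_combination Real.cosh y ^ 2 * hs - Real.sinh y ^ 2 * ht + Real.cosh_sq_sub_sinh_sq y
  · rw [hst]
    ring

theorem sq_norm_solitonU (ω x : ℝ) :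
    ‖solitonU ω x‖ ^ 2 = Real.sqrt (1 - ω ^ 2) ^ 2 / normSq (solitonDenom ω x) := by
  rw [solitonU_eq_div, norm_div, div_pow, norm_real, Real.norm_eq_abs, sq_abs,
    normSq_eq_norm_sq]

theorem hasDerivAt_arg_solitonDenom (hω : -1 < ω) (x : ℝ) :
    HasDerivAt (fun y => arg (solitonDenom ω y)) (‖solitonU ω x‖ ^ 2) x := by
  refine ((hasDerivAt_solitonDenom ω x).arg_real (solitonDenom_mem_slitPlane hω x)).congr_deriv ?_
  rw [div_im, sq_norm_solitonU, solitonDenom_re, solitonDenom_im, ← sub_div]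
  congr 1
  simp only [mul_re, mul_im, add_re, add_im, ofReal_re, ofReal_im, I_re, I_im]
  have hst := sqrt_one_sub_sq_eq_mul hω.le
  set y := Real.sqrt (1 - ω ^ 2) * x
  linear_combination Real.sqrt (1 - ω ^ 2) * Real.sqrt (1 + ω) * Real.sqrt (1 - ω) *
    Real.cosh_sq_sub_sinh_sq y - Real.sqrt (1 - ω ^ 2) * hst

theorem continuous_solitonU (hω : -1 < ω) : Continuous (solitonU ω) := by
  have hcont : Continuous (solitonDenom ω) :=
    continuous_iff_continuousAt.2 fun x => (hasDerivAt_solitonDenom ω x).continuousAt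
  exact continuous_const.div hcont fun x => slitPlane_ne_zero (solitonDenom_mem_slitPlane hω x)

theorem integral_sq_norm_solitonU (hω : -1 < ω) (x : ℝ) :
    ∫ x' in (0 : ℝ)..x, ‖solitonU ω x'‖ ^ 2 = arg (solitonDenom ω x) := by
  rw [intervalIntegral.integral_eq_sub_of_hasDerivAt (fun y _ => hasDerivAt_arg_solitonDenom hω y)
    (((continuous_solitonU hω).norm.pow 2).intervalIntegrable _ _), arg_solitonDenom_zero, sub_zero]

end

theorem stmt5 (ω : ℝ) (hω₁ : -1 < ω) (hω₂ : ω < 1) (x : ℝ) :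
    (solitonU ω x) ^ 2 *
        Complex.exp (6 * Complex.I *
          ((∫ x' in (0 : ℝ)..x, ‖solitonU ω x'‖ ^ 2 : ℝ) : ℂ))
      = ((1 - ω ^ 2 : ℝ) : ℂ) *
          (((1 + ω * Real.cosh (2 * Real.sqrt (1 - ω ^ 2) * x) : ℝ) : ℂ) +
            Complex.I * ((Real.sqrt (1 - ω ^ 2) * Real.sinh (2 * Real.sqrt (1 - ω ^ 2) * x) : ℝ) : ℂ)) ^ 2 /
          (((ω + Real.cosh (2 * Real.sqrt (1 - ω ^ 2) * x) : ℝ) : ℂ)) ^ 3 := by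
  rw [integral_sq_norm_solitonU hω₁, ← normSq_solitonDenom hω₁ hω₂, ← solitonDenom_sq hω₁ hω₂,
    solitonU_eq_div, normSq_eq_norm_sq]
  set z := solitonDenom ω x
  have hz : z ≠ 0 := slitPlane_ne_zero (solitonDenom_mem_slitPlane hω₁ x)
  have hphase := exp_nat_mul_I_mul_arg_mul_norm_pow 6 z
  have hk : ((Real.sqrt (1 - ω ^ 2) : ℝ) : ℂ) ^ 2 = ((1 - ω ^ 2 : ℝ) : ℂ) := by
    rw [← ofReal_pow, Real.sq_sqrt (by nlinarith)]
  have hnorm : (‖z‖ : ℂ) ≠ 0 := by exact_mod_cast norm_ne_zero_iff.2 hz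
  push_cast at hphase
  rw [div_pow, hk, ofReal_pow]
  field_simp
  linear_combination ((1 - ω ^ 2 : ℝ) : ℂ) * hphase
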